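/- Let Φ and h be as in the canonical construction with d = 1 + rλ + sλ′, let Υ be a clause minimum prime pure Horn CNF representation of h, and define the labelings f_j from Υ as in the construction. Then for each index j ∈ [t], the labeling f_j is a tight total-cover of the refined Label Cover instance L. -/

import Mathlib

open Finset

/-- A clause, given by its (fin)sets of positive and negative variables. -/
structure Clause (V : Type*) where
  pos : Finset V
  neg : Finset V
deriving DecidableEq

namespace Clause

variable {V : Type*}

/-- A genuine clause: no variable occurs both positively and negatively. -/
def IsClause (C : Clause V) : Prop := Disjoint C.pos C.neg

/-- Evaluation of a clause (as a disjunction of literals) under an assignment. -/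
def eval (C : Clause V) (a : V → Bool) : Prop :=
  (∃ v ∈ C.pos, a v = true) ∨ (∃ v ∈ C.neg, a v = false)

/-- A pure (definite) Horn clause: exactly one positive literal, its head. -/
def IsPureHorn (C : Clause V) : Prop := ∃ v, C.pos = {v}

end Clause

variable {V : Type*}

/-- Conjunction (as a predicate on assignments) of a set of clauses. -/
def evalSet (S : Set (Clause V)) (a : V → Bool) : Prop := ∀ C ∈ S, C.eval a

/-- Conjunction of the clauses of a CNF, i.e. of a finite set of clauses. -/
def evalCNF (Φ : Finset (Clause V)) (a : V → Bool) : Prop := ∀ C ∈ Φ, C.eval a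

/-- A CNF represents a Boolean function `h`. -/
def Represents (Φ : Finset (Clause V)) (h : (V → Bool) → Prop) : Prop :=
  ∀ a, evalCNF Φ a ↔ h a

/-- A pure Horn CNF: all clauses are pure Horn. -/
def IsPureHornCNF (Φ : Finset (Clause V)) : Prop :=
  ∀ C ∈ Φ, C.IsClause ∧ C.IsPureHorn

/-- The forward chaining closure of a set `Q` of variables with respect to the
pure Horn CNF `Φ`: the smallest set containing `Q` such that whenever `Φ` contains
a clause `S → v` with `S` inside the set, also `v` belongs to it. -/
def fcClosure (Φ : Finset (Clause V)) (Q : Set V) : Set V :=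
  ⋂₀ {T : Set V | Q ⊆ T ∧ ∀ C ∈ Φ, ∀ v : V, C.pos = {v} → ↑C.neg ⊆ T → v ∈ T}

/-- `C` is an implicate of `h`: every assignment falsifying `C` falsifies `h`. -/
def Implicate (h : (V → Bool) → Prop) (C : Clause V) : Prop :=
  ∀ a, ¬ C.eval a → ¬ h a

/-- `C` is a prime implicate of `h`: an implicate from which no literal can be
deleted while remaining an implicate. -/
def PrimeImplicate [DecidableEq V] (h : (V → Bool) → Prop) (C : Clause V) : Prop :=
  C.IsClause ∧ Implicate h C ∧
  (∀ v ∈ C.pos, ¬ Implicate h ⟨C.pos.erase v, C.neg⟩) ∧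
  (∀ v ∈ C.neg, ¬ Implicate h ⟨C.pos, C.neg.erase v⟩)

/-- `C₁` and `C₂` are resolvable on `v`: `v` occurs positively in `C₁`, negatively in
`C₂`, and no other variable occurs with opposite signs in them. -/
def Resolvable (C₁ C₂ : Clause V) (v : V) : Prop :=
  v ∈ C₁.pos ∧ v ∈ C₂.neg ∧
  ∀ w, w ≠ v → ¬(w ∈ C₁.pos ∧ w ∈ C₂.neg) ∧ ¬(w ∈ C₁.neg ∧ w ∈ C₂.pos)

/-- The resolvent `R(C₁,C₂) = (C₁ \ {v}) ∪ (C₂ \ {v̄})`. -/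
def resolventOf [DecidableEq V] (C₁ C₂ : Clause V) (v : V) : Clause V :=
  ⟨C₁.pos.erase v ∪ C₂.pos, C₁.neg ∪ C₂.neg.erase v⟩

/-- A set of clauses closed under resolution. -/
def ResClosed [DecidableEq V] (S : Set (Clause V)) : Prop :=
  ∀ C₁ ∈ S, ∀ C₂ ∈ S, ∀ v, Resolvable C₁ C₂ v → resolventOf C₁ C₂ v ∈ S

/-- The resolution closure of a set of clauses. -/
def resClosure [DecidableEq V] (S : Set (Clause V)) : Set (Clause V) :=
  ⋂₀ {T : Set (Clause V) | S ⊆ T ∧ ResClosed T}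

/-- `I(h)`: the resolution closure of the set of prime implicates of `h`. -/
def implSet [DecidableEq V] (h : (V → Bool) → Prop) : Set (Clause V) :=
  resClosure {C | PrimeImplicate h C}

/-- An exclusive set of clauses of `h`. -/
def ExclusiveSet [DecidableEq V] (h : (V → Bool) → Prop) (Xs : Set (Clause V)) : Prop :=
  Xs ⊆ implSet h ∧
  ∀ C₁ ∈ implSet h, ∀ C₂ ∈ implSet h, ∀ v, Resolvable C₁ C₂ v →
    resolventOf C₁ C₂ v ∈ Xs → C₁ ∈ Xs ∧ C₂ ∈ Xs

/-- The set of variables occurring in a CNF. -/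
def varsOf [DecidableEq V] (Φ : Finset (Clause V)) : Finset V :=
  Φ.biUnion fun C => C.pos ∪ C.neg


/-- A Label Cover instance: a bipartite graph with parts `X` and `Y` and edge set `E`,
label sets `A` (for `X`-vertices) and `B` (for `Y`-vertices), and a nonempty
constraint relation `cst e ⊆ A × B` for every edge `e ∈ E`. -/
structure LabelCover (X Y A B : Type*) where
  E : Finset (X × Y)
  cst : X × Y → Finset (A × B)
  cst_nonempty : ∀ e ∈ E, (cst e).Nonempty

namespace LabelCover

variable {X Y A B : Type*}

/-- A labeling `(f, g)` covers an edge `(x,y)` if for every label `b ∈ g y` there is a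
label `a ∈ f x` with `(a, b)` admissible for the edge. -/
def Covers (I : LabelCover X Y A B) (f : X → Finset A) (g : Y → Finset B)
    (e : X × Y) : Prop :=
  ∀ b ∈ g e.2, ∃ a ∈ f e.1, (a, b) ∈ I.cst e

/-- A total-cover: a labeling (assigning a nonempty label set to every `Y`-vertex)
covering every edge. -/
def IsTotalCover (I : LabelCover X Y A B) (f : X → Finset A) (g : Y → Finset B) : Prop :=
  (∀ y, (g y).Nonempty) ∧ ∀ e ∈ I.E, I.Covers f g e

/-- A total-cover is tight if every `Y`-vertex receives exactly one label. -/
def Tight (g : Y → Finset B) : Prop := ∀ y, (g y).card = 1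

end LabelCover

/-- The cost of a labeling: the average number of labels assigned to `X`-vertices. -/
def lcCost {X A : Type*} [Fintype X] (f : X → Finset A) : ℚ :=
  (∑ x, ((f x).card : ℚ)) / (Fintype.card X : ℚ)


/-- The labels of the refined Label Cover instance: `L ∪ L′`, where `L = ⋃_x L_x`
with `L_x = {x} × A` and `L′ = ⋃_y L′_y` with `L′_y = {y} × B`. -/
abbrev Lab (X Y A B : Type*) := (X × A) ⊕ (Y × B)

/-- The propositional variables of the canonical pure Horn CNF construction:
`u ℓ` for labels `ℓ ∈ L ∪ L′`, `e x y i` and `el x y ℓ′ i` for edges `(x,y)`,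
labels `ℓ′ ∈ L′_y` and indices `i ∈ [d]`, and `v j` for `j ∈ [t]`. -/
inductive PV (X Y A B : Type*) where
  | u : Lab X Y A B → PV X Y A B
  | e : X → Y → ℕ → PV X Y A B
  | el : X → Y → B → ℕ → PV X Y A B
  | v : ℕ → PV X Y A B
deriving DecidableEq

section Canonical

variable {X Y A B : Type*} [Fintype X] [Fintype Y] [Fintype A] [Fintype B]
  [DecidableEq X] [DecidableEq Y] [DecidableEq A] [DecidableEq B]

/-- The (open) neighborhood `N(y) = {z ∈ X : (z,y) ∈ E}`. -/
def Nbr (I : LabelCover X Y A B) (y : Y) : Finset X :=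
  Finset.univ.filter fun z => (z, y) ∈ I.E

/-- Clauses (a): `u(ℓ) ∧ u(ℓ′) → e(x,y,ℓ′,i)` for `(x,y) ∈ E`, `(ℓ,ℓ′) ∈ Π_{(x,y)}`,
`i ∈ [d]`. -/
def clA (I : LabelCover X Y A B) (d : ℕ) : Finset (Clause (PV X Y A B)) :=
  (I.E ×ˢ Finset.Icc 1 d).biUnion fun p =>
    (I.cst p.1).image fun ab =>
      ⟨{PV.el p.1.1 p.1.2 ab.2 p.2},
       {PV.u (Sum.inl (p.1.1, ab.1)), PV.u (Sum.inr (p.1.2, ab.2))}⟩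

/-- Clauses (b): `⋀_{z ∈ N(y)} e(z,y,ℓ′,i) → e(x,y,i)` for `(x,y) ∈ E`, `ℓ′ ∈ L′_y`,
`i ∈ [d]`. -/
def clB (I : LabelCover X Y A B) (d : ℕ) : Finset (Clause (PV X Y A B)) :=
  ((I.E ×ˢ (Finset.univ : Finset B)) ×ˢ Finset.Icc 1 d).image fun p =>
    ⟨{PV.e p.1.1.1 p.1.1.2 p.2},
     (Nbr I p.1.1.2).image fun z => PV.el z p.1.1.2 p.1.2 p.2⟩

/-- Clauses (c): `e(x,y,i) → e(x,y,ℓ′,i)` for `(x,y) ∈ E`, `ℓ′ ∈ L′_y`, `i ∈ [d]`. -/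
def clC (I : LabelCover X Y A B) (d : ℕ) : Finset (Clause (PV X Y A B)) :=
  ((I.E ×ˢ (Finset.univ : Finset B)) ×ˢ Finset.Icc 1 d).image fun p =>
    ⟨{PV.el p.1.1.1 p.1.1.2 p.1.2 p.2}, {PV.e p.1.1.1 p.1.1.2 p.2}⟩

/-- The common body of the clauses (d): all variables `e(x,y,i)`, `(x,y) ∈ E`, `i ∈ [d]`. -/
def bigBody (I : LabelCover X Y A B) (d : ℕ) : Finset (PV X Y A B) :=
  (I.E ×ˢ Finset.Icc 1 d).image fun p => PV.e p.1.1 p.1.2 p.2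

/-- Clauses (d): `⋀_{i ∈ [d]} ⋀_{(x,y) ∈ E} e(x,y,i) → u(ℓ)` for `ℓ ∈ L ∪ L′`. -/
def clD (I : LabelCover X Y A B) (d : ℕ) : Finset (Clause (PV X Y A B)) :=
  (Finset.univ : Finset (Lab X Y A B)).image fun ℓ => ⟨{PV.u ℓ}, bigBody I d⟩

/-- Clauses (e): `v(j) → u(ℓ)` for `j ∈ [t]`, `ℓ ∈ L ∪ L′`. -/
def clE (X Y A B : Type*) [Fintype X] [Fintype Y] [Fintype A] [Fintype B]
    [DecidableEq X] [DecidableEq Y] [DecidableEq A] [DecidableEq B]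
    (t : ℕ) : Finset (Clause (PV X Y A B)) :=
  (Finset.Icc 1 t ×ˢ (Finset.univ : Finset (Lab X Y A B))).image fun p =>
    ⟨{PV.u p.2}, {PV.v p.1}⟩

/-- The canonical formula `Ψ`: clauses of types (a)–(d). -/
def PsiCNF (I : LabelCover X Y A B) (d : ℕ) : Finset (Clause (PV X Y A B)) :=
  clA I d ∪ clB I d ∪ clC I d ∪ clD I d

/-- The canonical formula `Φ`: clauses of types (a)–(e). -/
def PhiCNF (I : LabelCover X Y A B) (d t : ℕ) : Finset (Clause (PV X Y A B)) :=
  PsiCNF I d ∪ clE X Y A B t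

/-- The pure Horn function `h` represented by the canonical formula `Φ`. -/
def hFun (I : LabelCover X Y A B) (d t : ℕ) : (PV X Y A B → Bool) → Prop :=
  fun a => evalCNF (PhiCNF I d t) a

/-- The pure Horn function `g` represented by the canonical formula `Ψ`. -/
def gFun (I : LabelCover X Y A B) (d : ℕ) : (PV X Y A B → Bool) → Prop :=
  fun a => evalCNF (PsiCNF I d) a

end Canonical


/-- The `X`-side labeling extracted from a representation `Υ` of `h`:
`f_j(x) = S_j ∩ L_x`, where `S_j` is the set of labels `ℓ` such that the clause
`v(j) → u(ℓ)` belongs to `Υ`. -/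
def fjX {X Y A B : Type*} [Fintype X] [Fintype Y] [Fintype A] [Fintype B]
    [DecidableEq X] [DecidableEq Y] [DecidableEq A] [DecidableEq B]
    (Υ : Finset (Clause (PV X Y A B))) (j : ℕ) (x : X) : Finset A :=
  Finset.univ.filter fun a =>
    (⟨{PV.u (Sum.inl (x, a))}, {PV.v j}⟩ : Clause (PV X Y A B)) ∈ Υ

/-- The `Y`-side labeling extracted from a representation `Υ` of `h`:
`f_j(y) = S_j ∩ L′_y`, where `S_j` is the set of labels `ℓ` such that the clause
`v(j) → u(ℓ)` belongs to `Υ`. -/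
def fjY {X Y A B : Type*} [Fintype X] [Fintype Y] [Fintype A] [Fintype B]
    [DecidableEq X] [DecidableEq Y] [DecidableEq A] [DecidableEq B]
    (Υ : Finset (Clause (PV X Y A B))) (j : ℕ) (y : Y) : Finset B :=
  Finset.univ.filter fun b =>
    (⟨{PV.u (Sum.inr (y, b))}, {PV.v j}⟩ : Clause (PV X Y A B)) ∈ Υ

/-!
Let `S_j` be the set of labels `ℓ` with `v(j) → u(ℓ)` in `Υ`. By primality every clause of `Υ`
whose body contains `v(j)` is a clause `v(j) → w`, and the heads `w` of these clauses derive every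
`u(ℓ)` in `Φ`. If these heads miss some layer `i ∈ [d]`, the symmetry of `Φ` between layers shows
that the heads `u(ℓ)`, `ℓ ∈ S_j`, already derive every `u(ℓ)`; and if they hit all `d` layers,
replacing them by the `d - 1` clauses `v(j) → u(ℓ)` contradicts minimality. In `Φ`, the variables
`u(ℓ)`, `ℓ ∈ S_j`, derive everything only if every `y ∈ Y` has a label `b` supported by `S_j`:
`u(y,b) ∈ S_j`, and every neighbour `x` of `y` has a label in `S_j` compatible with `b`. Finally,
if `f_j(y)` contained an unsupported label, or a second label besides a supported one, the
corresponding clause `v(j) → u(y,b)` could be dropped from `Υ`. So `f_j(y)` consists of the unique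
supported label of `y`, and `f_j` is a tight total-cover.
-/

section ForwardChaining

variable {Φ Ψ : Finset (Clause V)} {Q R : Set V} {h : (V → Bool) → Prop}

def FcClosed (Φ : Finset (Clause V)) (T : Set V) : Prop :=
  ∀ C ∈ Φ, ∀ v : V, C.pos = {v} → ↑C.neg ⊆ T → v ∈ T

lemma Clause.eq_of_pos_eq {C : Clause V} {w : V} (hw : C.pos = {w}) : C = ⟨{w}, C.neg⟩ := by
  rw [← hw]

lemma subset_fcClosure : Q ⊆ fcClosure Φ Q := fun _ hw =>
  Set.mem_sInter.2 fun _ hT => hT.1 hw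

lemma fcClosed_fcClosure : FcClosed Φ (fcClosure Φ Q) := fun C hC v hv hneg =>
  Set.mem_sInter.2 fun _ hT => hT.2 C hC v hv (hneg.trans (Set.sInter_subset_of_mem hT))

lemma fcClosure_subset (hQ : Q ⊆ R) (hR : FcClosed Φ R) : fcClosure Φ Q ⊆ R :=
  Set.sInter_subset_of_mem ⟨hQ, hR⟩

lemma fcClosure_subset_fcClosure (h : Q ⊆ fcClosure Φ R) : fcClosure Φ Q ⊆ fcClosure Φ R :=
  fcClosure_subset h fcClosed_fcClosure

lemma fcClosure_mono (h : Q ⊆ R) : fcClosure Φ Q ⊆ fcClosure Φ R :=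
  fcClosure_subset_fcClosure (h.trans subset_fcClosure)

lemma mem_fcClosure_of_mem {C : Clause V} {w : V} (hC : C ∈ Φ) (hw : C.pos = {w})
    (hneg : ↑C.neg ⊆ fcClosure Φ Q) : w ∈ fcClosure Φ Q :=
  fcClosed_fcClosure C hC w hw hneg

lemma fcClosure_subset_union_heads : fcClosure Φ Q ⊆ Q ∪ {w | ∃ C ∈ Φ, C.pos = {w}} :=
  fcClosure_subset Set.subset_union_left fun C hC _ hw _ => Or.inr ⟨C, hC, hw⟩

lemma fcClosed_setOf_eq_true {a : V → Bool} (ha : evalCNF Φ a) :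
    FcClosed Φ {v | a v = true} := by
  intro C hC v hv hneg
  rcases ha C hC with ⟨w, hw, hwa⟩ | ⟨w, hw, hwa⟩
  · rw [hv, Finset.mem_singleton] at hw
    exact hw ▸ hwa
  · simpa [hwa] using hneg hw

lemma Represents.implicate (hrep : Represents Φ h) {C : Clause V} (hC : C ∈ Φ) :
    Implicate h C :=
  fun a hne ha => hne ((hrep a).2 ha C hC)

lemma implicate_iff_mem_fcClosure (hΦ : IsPureHornCNF Φ) (hrep : Represents Φ h)
    (S : Finset V) (w : V) : Implicate h ⟨{w}, S⟩ ↔ w ∈ fcClosure Φ ↑S := by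
  classical
  constructor
  · intro him
    by_contra hw
    -- the indicator of the closure satisfies `Φ` but falsifies `S → w`
    refine him (fun v => decide (v ∈ fcClosure Φ ↑S)) ?_ ((hrep _).1 fun C hC => ?_)
    · rintro (⟨v, hv, hva⟩ | ⟨v, hv, hva⟩)
      · rw [Finset.mem_singleton.1 hv] at hva
        simp [hw] at hva
      · simp [subset_fcClosure (Finset.mem_coe.2 hv)] at hva
    · obtain ⟨v, hv⟩ := (hΦ C hC).2
      by_cases hn : ↑C.neg ⊆ fcClosure Φ ↑S
      · exact Or.inl ⟨v, by simp [hv], by simp [mem_fcClosure_of_mem hC hv hn]⟩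
      · obtain ⟨z, hz, hzS⟩ := Set.not_subset.1 hn
        exact Or.inr ⟨z, hz, by simpa using hzS⟩
  · intro hw a hne ha
    have hS : (↑S : Set V) ⊆ {v | a v = true} := fun v hv => by
      by_contra hva
      exact hne (Or.inr ⟨v, hv, by simpa using hva⟩)
    exact hne (Or.inl ⟨w, Finset.mem_singleton_self w,
      fcClosure_subset hS (fcClosed_setOf_eq_true ((hrep a).2 ha)) hw⟩)

lemma fcClosure_subset_of_implicate (hΦ : IsPureHornCNF Φ) (hrep : Represents Φ h)
    (hΨ : ∀ C ∈ Ψ, Implicate h C) : fcClosure Ψ Q ⊆ fcClosure Φ Q := by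
  refine fcClosure_subset subset_fcClosure fun C hC w hw hneg => ?_
  have hC' := hΨ C hC
  rw [Clause.eq_of_pos_eq hw, implicate_iff_mem_fcClosure hΦ hrep] at hC'
  exact fcClosure_subset_fcClosure hneg hC'

lemma fcClosure_eq_of_represents (hΦ : IsPureHornCNF Φ) (hrepΦ : Represents Φ h)
    (hΨ : IsPureHornCNF Ψ) (hrepΨ : Represents Ψ h) : fcClosure Ψ Q = fcClosure Φ Q :=
  (fcClosure_subset_of_implicate hΦ hrepΦ fun _ => hrepΨ.implicate).antisymm
    (fcClosure_subset_of_implicate hΨ hrepΨ fun _ => hrepΦ.implicate)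

lemma Represents.of_mem_fcClosure (hΦ : IsPureHornCNF Φ) (hrep : Represents Φ h)
    (hΨ : ∀ C ∈ Ψ, Implicate h C)
    (hder : ∀ C ∈ Φ, ∀ w, C.pos = {w} → w ∈ fcClosure Ψ ↑C.neg) : Represents Ψ h := by
  refine fun a => ⟨fun ha => (hrep a).1 fun C hC => ?_, fun ha C hC => ?_⟩
  · obtain ⟨w, hw⟩ := (hΦ C hC).2
    by_cases hneg : ∀ v ∈ C.neg, a v = true
    · exact Or.inl ⟨w, by simp [hw],
        fcClosure_subset hneg (fcClosed_setOf_eq_true ha) (hder C hC w hw)⟩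
    · push Not at hneg
      obtain ⟨z, hz, hza⟩ := hneg
      exact Or.inr ⟨z, hz, by simpa using hza⟩
  · by_contra hne
    exact hΨ C hC a hne ha

lemma fcClosure_subset_of_not_fires (h : ∀ C ∈ Φ, C ∉ Ψ → ¬ ↑C.neg ⊆ fcClosure Ψ Q) :
    fcClosure Φ Q ⊆ fcClosure Ψ Q := by
  refine fcClosure_subset subset_fcClosure fun C hC w hw hneg => ?_
  by_cases hCΨ : C ∈ Ψ
  · exact mem_fcClosure_of_mem hCΨ hw hneg
  · exact absurd hneg (h C hC hCΨ)

lemma fcClosure_singleton_subset (p : V) (h : ∀ C ∈ Φ, p ∈ C.neg → C.neg = {p}) :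
    fcClosure Φ {p} ⊆ insert p (fcClosure Φ {w | ⟨{w}, {p}⟩ ∈ Φ}) := by
  refine fcClosure_subset (by simp) fun C hC w hw hneg => Or.inr ?_
  by_cases hp : p ∈ C.neg
  · have hC' : ⟨{w}, {p}⟩ ∈ Φ := by rwa [← h C hC hp, ← Clause.eq_of_pos_eq hw]
    exact subset_fcClosure hC'
  · refine mem_fcClosure_of_mem hC hw fun z hz => ?_
    rcases hneg hz with rfl | hz'
    · exact absurd hz hp
    · exact hz'

lemma fcClosure_image_subset [DecidableEq V] {σ : V → V}
    (hσ : ∀ C ∈ Φ, (⟨C.pos.image σ, C.neg.image σ⟩ : Clause V) ∈ Φ) :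
    σ '' fcClosure Φ Q ⊆ fcClosure Φ (σ '' Q) := by
  rw [Set.image_subset_iff]
  refine fcClosure_subset (fun w hw => subset_fcClosure (Set.mem_image_of_mem σ hw)) ?_
  intro C hC w hw hneg
  refine mem_fcClosure_of_mem (hσ C hC) (by rw [hw, Finset.image_singleton]) ?_
  rw [Finset.coe_image, Set.image_subset_iff]
  exact hneg

end ForwardChaining

section LabelCoverVariables

variable {X Y A B : Type*} {I : LabelCover X Y A B} {d : ℕ}

lemma mem_Nbr [Fintype X] [DecidableEq X] [DecidableEq Y] {x : X} {y : Y} :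
    x ∈ Nbr I y ↔ (x, y) ∈ I.E := by
  simp [Nbr]

lemma mem_bigBody [DecidableEq X] [DecidableEq Y] [DecidableEq A] [DecidableEq B]
    {w : PV X Y A B} :
    w ∈ bigBody I d ↔ ∃ x y i, (x, y) ∈ I.E ∧ i ∈ Icc 1 d ∧ w = PV.e x y i := by
  simp only [bigBody, mem_image, mem_product, Prod.exists]
  exact ⟨fun ⟨x, y, i, ⟨hE, hi⟩, hw⟩ => ⟨x, y, i, hE, hi, hw.symm⟩,
    fun ⟨x, y, i, hE, hi, hw⟩ => ⟨x, y, i, ⟨hE, hi⟩, hw.symm⟩⟩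

def PV.layer : PV X Y A B → ℕ
  | .u _ => 0
  | .e _ _ i => i
  | .el _ _ _ i => i
  | .v _ => 0

def PV.mapLayer (σ : ℕ → ℕ) : PV X Y A B → PV X Y A B
  | .u ℓ => .u ℓ
  | .e x y i => .e x y (σ i)
  | .el x y b i => .el x y b (σ i)
  | .v j => .v j

lemma image_mapLayer_bigBody [DecidableEq X] [DecidableEq Y] [DecidableEq A] [DecidableEq B]
    {σ : Equiv.Perm ℕ} (hσ : ∀ i, σ i ∈ Icc 1 d ↔ i ∈ Icc 1 d) :
    (bigBody I d).image (PV.mapLayer σ) = bigBody I d := by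
  ext w
  simp only [mem_image, mem_bigBody]
  constructor
  · rintro ⟨_, ⟨x, y, i, hE, hi, rfl⟩, rfl⟩
    exact ⟨x, y, σ i, hE, (hσ i).2 hi, rfl⟩
  · rintro ⟨x, y, i, hE, hi, rfl⟩
    exact ⟨_, ⟨x, y, σ.symm i, hE, by rwa [← hσ, σ.apply_symm_apply], rfl⟩,
      by simp [PV.mapLayer]⟩

def IsHead (I : LabelCover X Y A B) (d : ℕ) : PV X Y A B → Prop
  | .u _ => True
  | .e x y i => (x, y) ∈ I.E ∧ i ∈ Icc 1 d
  | .el x y _ i => (x, y) ∈ I.E ∧ i ∈ Icc 1 d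
  | .v _ => False

lemma IsHead.mem_range_u_of_layer_eq_zero {w : PV X Y A B} (hw : IsHead I d w)
    (h0 : w.layer = 0) : w ∈ Set.range PV.u := by
  cases w with
  | u ℓ => exact ⟨ℓ, rfl⟩
  | e x y i => simp_all [IsHead, PV.layer]
  | el x y b i => simp_all [IsHead, PV.layer]
  | v j => exact hw.elim

def LabelCover.Supported (I : LabelCover X Y A B) (S : Set (Lab X Y A B)) (y : Y) (b : B) :
    Prop :=
  .inr (y, b) ∈ S ∧ ∀ x, (x, y) ∈ I.E → ∃ a, .inl (x, a) ∈ S ∧ (a, b) ∈ I.cst (x, y)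

lemma LabelCover.Supported.mono {S T : Set (Lab X Y A B)} {y : Y} {b : B}
    (h : I.Supported S y b) (hST : S ⊆ T) : I.Supported T y b :=
  ⟨hST h.1, fun x hE => let ⟨a, ha, hab⟩ := h.2 x hE; ⟨a, hST ha, hab⟩⟩

lemma LabelCover.exists_supported_univ (hfeas : ∃ f g, I.IsTotalCover f g) (y : Y) :
    ∃ b, I.Supported Set.univ y b := by
  obtain ⟨f, g, hne, hcov⟩ := hfeas
  obtain ⟨b, hb⟩ := hne y
  refine ⟨b, trivial, fun x hE => ?_⟩
  obtain ⟨a, -, hab⟩ := hcov (x, y) hE b hb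
  exact ⟨a, trivial, hab⟩

end LabelCoverVariables

section Canonical

variable {X Y A B : Type*} [Fintype X] [Fintype Y] [Fintype A] [Fintype B]
  [DecidableEq X] [DecidableEq Y] [DecidableEq A] [DecidableEq B]
  {I : LabelCover X Y A B} {d t : ℕ}

lemma mem_PhiCNF {C : Clause (PV X Y A B)} :
    C ∈ PhiCNF I d t ↔
      (∃ x y i a b, (x, y) ∈ I.E ∧ i ∈ Icc 1 d ∧ (a, b) ∈ I.cst (x, y) ∧
        C = ⟨{PV.el x y b i}, {PV.u (.inl (x, a)), PV.u (.inr (y, b))}⟩) ∨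
      (∃ x y b i, (x, y) ∈ I.E ∧ i ∈ Icc 1 d ∧
        C = ⟨{PV.e x y i}, (Nbr I y).image fun z => PV.el z y b i⟩) ∨
      (∃ x y b i, (x, y) ∈ I.E ∧ i ∈ Icc 1 d ∧ C = ⟨{PV.el x y b i}, {PV.e x y i}⟩) ∨
      (∃ ℓ, C = ⟨{PV.u ℓ}, bigBody I d⟩) ∨
      (∃ j ℓ, j ∈ Icc 1 t ∧ C = ⟨{PV.u ℓ}, {PV.v j}⟩) := by
  simp only [PhiCNF, PsiCNF, clA, clB, clC, clD, clE, mem_union, mem_biUnion, mem_image,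
    mem_product, mem_univ, true_and, and_true, Prod.exists, or_assoc, and_assoc,
    exists_and_left, @eq_comm _ _ C]

lemma clauseA_mem_PhiCNF {x : X} {y : Y} {a : A} {b : B} {i : ℕ} (hE : (x, y) ∈ I.E)
    (hi : i ∈ Icc 1 d) (hab : (a, b) ∈ I.cst (x, y)) :
    (⟨{PV.el x y b i}, {PV.u (.inl (x, a)), PV.u (.inr (y, b))}⟩ : Clause (PV X Y A B)) ∈
      PhiCNF I d t :=
  mem_PhiCNF.2 (Or.inl ⟨x, y, i, a, b, hE, hi, hab, rfl⟩)

lemma clauseB_mem_PhiCNF {x : X} {y : Y} (b : B) {i : ℕ} (hE : (x, y) ∈ I.E)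
    (hi : i ∈ Icc 1 d) :
    (⟨{PV.e x y i}, (Nbr I y).image fun z => PV.el z y b i⟩ : Clause (PV X Y A B)) ∈
      PhiCNF I d t :=
  mem_PhiCNF.2 (Or.inr (Or.inl ⟨x, y, b, i, hE, hi, rfl⟩))

lemma clauseC_mem_PhiCNF {x : X} {y : Y} (b : B) {i : ℕ} (hE : (x, y) ∈ I.E)
    (hi : i ∈ Icc 1 d) :
    (⟨{PV.el x y b i}, {PV.e x y i}⟩ : Clause (PV X Y A B)) ∈ PhiCNF I d t :=
  mem_PhiCNF.2 (Or.inr (Or.inr (Or.inl ⟨x, y, b, i, hE, hi, rfl⟩)))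

lemma clauseD_mem_PhiCNF (ℓ : Lab X Y A B) :
    (⟨{PV.u ℓ}, bigBody I d⟩ : Clause (PV X Y A B)) ∈ PhiCNF I d t :=
  mem_PhiCNF.2 (Or.inr (Or.inr (Or.inr (Or.inl ⟨ℓ, rfl⟩))))

lemma clauseE_mem_PhiCNF (ℓ : Lab X Y A B) {j : ℕ} (hj : j ∈ Icc 1 t) :
    (⟨{PV.u ℓ}, {PV.v j}⟩ : Clause (PV X Y A B)) ∈ PhiCNF I d t :=
  mem_PhiCNF.2 (Or.inr (Or.inr (Or.inr (Or.inr ⟨j, ℓ, hj, rfl⟩))))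

lemma isPureHornCNF_PhiCNF : IsPureHornCNF (PhiCNF I d t) := by
  intro C hC
  rcases mem_PhiCNF.1 hC with ⟨x, y, i, a, b, -, -, -, rfl⟩ | ⟨x, y, b, i, -, -, rfl⟩ |
    ⟨x, y, b, i, -, -, rfl⟩ | ⟨ℓ, rfl⟩ | ⟨j, ℓ, -, rfl⟩ <;>
    exact ⟨by simp [Clause.IsClause, mem_bigBody], _, rfl⟩

lemma represents_PhiCNF : Represents (PhiCNF I d t) (hFun I d t) := fun _ => Iff.rfl

lemma isHead_of_mem_PhiCNF {C : Clause (PV X Y A B)} {w : PV X Y A B}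
    (hC : C ∈ PhiCNF I d t) (hw : C.pos = {w}) : IsHead I d w := by
  rcases mem_PhiCNF.1 hC with ⟨x, y, i, a, b, hE, hi, -, rfl⟩ | ⟨x, y, b, i, hE, hi, rfl⟩ |
    ⟨x, y, b, i, hE, hi, rfl⟩ | ⟨ℓ, rfl⟩ | ⟨j, ℓ, -, rfl⟩ <;>
    obtain rfl := Finset.singleton_inj.1 hw
  exacts [⟨hE, hi⟩, ⟨hE, hi⟩, ⟨hE, hi⟩, trivial, trivial]

lemma fcClosure_PhiCNF_subset {Q : Set (PV X Y A B)} :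
    fcClosure (PhiCNF I d t) Q ⊆ Q ∪ {w | IsHead I d w} :=
  fcClosure_subset_union_heads.trans
    (Set.union_subset_union_right _ fun _ ⟨_, hC, hw⟩ => isHead_of_mem_PhiCNF hC hw)

lemma v_not_mem_fcClosure {Q : Set (PV X Y A B)} {j : ℕ} (hj : PV.v j ∉ Q) :
    PV.v j ∉ fcClosure (PhiCNF I d t) Q :=
  fun h => (fcClosure_PhiCNF_subset h).elim hj id

lemma e_mem_fcClosure {Q : Set (PV X Y A B)} {x : X} {y : Y} {b : B} {i : ℕ}
    (hE : (x, y) ∈ I.E) (hi : i ∈ Icc 1 d)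
    (hb : I.Supported {ℓ | PV.u ℓ ∈ fcClosure (PhiCNF I d t) Q} y b) :
    PV.e x y i ∈ fcClosure (PhiCNF I d t) Q := by
  refine mem_fcClosure_of_mem (clauseB_mem_PhiCNF b hE hi) rfl ?_
  rw [coe_image, Set.image_subset_iff]
  intro z hz
  obtain ⟨a, ha, hab⟩ := hb.2 z (mem_Nbr.1 hz)
  refine mem_fcClosure_of_mem (clauseA_mem_PhiCNF (mem_Nbr.1 hz) hi hab) rfl ?_
  simp only [coe_insert, coe_singleton, Set.insert_subset_iff, Set.singleton_subset_iff]
  exact ⟨ha, hb.1⟩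

lemma u_mem_fcClosure_of_supported {S : Set (Lab X Y A B)}
    (h : ∀ y, ∃ b, I.Supported S y b) (ℓ : Lab X Y A B) :
    PV.u ℓ ∈ fcClosure (PhiCNF I d t) (PV.u '' S) := by
  refine mem_fcClosure_of_mem (clauseD_mem_PhiCNF ℓ) rfl fun w hw => ?_
  obtain ⟨x, y, i, hE, hi, rfl⟩ := mem_bigBody.1 hw
  obtain ⟨b, hb⟩ := h y
  exact e_mem_fcClosure hE hi
    (hb.mono fun _ hℓ' => subset_fcClosure (Set.mem_image_of_mem _ hℓ'))

lemma mem_fcClosure_of_isHead (hfeas : ∃ f g, I.IsTotalCover f g) {Q : Set (PV X Y A B)}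
    (hu : ∀ ℓ, PV.u ℓ ∈ fcClosure (PhiCNF I d t) Q) {w : PV X Y A B} (hw : IsHead I d w) :
    w ∈ fcClosure (PhiCNF I d t) Q := by
  have he : ∀ x y i, (x, y) ∈ I.E → i ∈ Icc 1 d → PV.e x y i ∈ fcClosure (PhiCNF I d t) Q :=
    fun x y i hE hi =>
      let ⟨_, hb⟩ := I.exists_supported_univ hfeas y
      e_mem_fcClosure hE hi (hb.mono fun ℓ _ => hu ℓ)
  match w, hw with
  | .u ℓ, _ => exact hu ℓ
  | .e x y i, ⟨hE, hi⟩ => exact he x y i hE hi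
  | .el x y b i, ⟨hE, hi⟩ =>
    exact mem_fcClosure_of_mem (clauseC_mem_PhiCNF b hE hi) rfl (by simpa using he x y i hE hi)

lemma mapLayer_mem_PhiCNF {σ : Equiv.Perm ℕ} (hσ : ∀ i, σ i ∈ Icc 1 d ↔ i ∈ Icc 1 d)
    {C : Clause (PV X Y A B)} (hC : C ∈ PhiCNF I d t) :
    (⟨C.pos.image (PV.mapLayer σ), C.neg.image (PV.mapLayer σ)⟩ : Clause (PV X Y A B)) ∈
      PhiCNF I d t := by
  rcases mem_PhiCNF.1 hC with ⟨x, y, i, a, b, hE, hi, hab, rfl⟩ | ⟨x, y, b, i, hE, hi, rfl⟩ |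
    ⟨x, y, b, i, hE, hi, rfl⟩ | ⟨ℓ, rfl⟩ | ⟨j, ℓ, hj, rfl⟩
  · simpa [PV.mapLayer] using clauseA_mem_PhiCNF (t := t) hE ((hσ i).2 hi) hab
  · simpa [PV.mapLayer, image_image, Function.comp_def] using
      clauseB_mem_PhiCNF (t := t) b hE ((hσ i).2 hi)
  · simpa [PV.mapLayer] using clauseC_mem_PhiCNF (t := t) b hE ((hσ i).2 hi)
  · simpa [PV.mapLayer, image_mapLayer_bigBody hσ] using
      clauseD_mem_PhiCNF (I := I) (d := d) (t := t) ℓ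
  · simpa [PV.mapLayer] using clauseE_mem_PhiCNF (I := I) (d := d) ℓ hj

/-- Permuting the layers is a symmetry of `Φ` fixing every `u`-variable. -/
lemma e_mem_fcClosure_of_layer {U : Set (PV X Y A B)} (hU : U ⊆ Set.range PV.u)
    {x : X} {y : Y} {i i' : ℕ} (hi : i ∈ Icc 1 d) (hi' : i' ∈ Icc 1 d)
    (he : PV.e x y i ∈ fcClosure (PhiCNF I d t) U) :
    PV.e x y i' ∈ fcClosure (PhiCNF I d t) U := by
  have hσ : ∀ k, Equiv.swap i i' k ∈ Icc 1 d ↔ k ∈ Icc 1 d := by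
    intro k
    rw [Equiv.swap_apply_def]
    split_ifs <;> simp_all
  have hUσ : PV.mapLayer (Equiv.swap i i') '' U = U := by
    refine (Set.image_congr fun w hw => ?_).trans (Set.image_id U)
    obtain ⟨ℓ, rfl⟩ := hU hw
    rfl
  have := fcClosure_image_subset (fun C hC => mapLayer_mem_PhiCNF hσ hC) ⟨_, he, rfl⟩
  simpa [hUσ, PV.mapLayer] using this

/-- The body of a clause (d) contains every `e(x,y,i)`, and when `Q` misses layer `i` these
can only come from the `u`-variables of `Q`. -/
lemma u_mem_fcClosure_inter_range_u {Q : Set (PV X Y A B)} {i : ℕ} (hi : i ∈ Icc 1 d)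
    (hQ : ∀ w ∈ Q, IsHead I d w ∧ w.layer ≠ i) {ℓ : Lab X Y A B}
    (hℓ : PV.u ℓ ∈ fcClosure (PhiCNF I d t) Q) :
    PV.u ℓ ∈ fcClosure (PhiCNF I d t) (Q ∩ Set.range PV.u) := by
  set F := fcClosure (PhiCNF I d t) (Q ∩ Set.range PV.u)
  set T := F ∪ {w | w.layer ≠ 0 ∧ w.layer ≠ i}
  have hTF : ∀ w ∈ T, w.layer = 0 ∨ w.layer = i → w ∈ F := by
    rintro w (hw | ⟨h0, hi'⟩) hl
    exacts [hw, by omega]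
  have hQT : Q ⊆ T := by
    intro w hw
    by_cases h0 : w.layer = 0
    · exact Or.inl (subset_fcClosure ⟨hw, (hQ w hw).1.mem_range_u_of_layer_eq_zero h0⟩)
    · exact Or.inr ⟨h0, (hQ w hw).2⟩
  have hclosed : FcClosed (PhiCNF I d t) T := by
    intro C hC w hw hneg
    have layered : ∀ k ∈ Icc 1 d, w.layer = k → (∀ z ∈ C.neg, z.layer = 0 ∨ z.layer = k) →
        w ∈ T := by
      intro k hk hwk hbody
      by_cases hki : k = i
      · subst hki
        exact Or.inl (mem_fcClosure_of_mem hC hw fun z hz => hTF z (hneg hz) (hbody z hz))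
      · exact Or.inr ⟨by have := (mem_Icc.1 hk).1; omega, by omega⟩
    rcases mem_PhiCNF.1 hC with ⟨x, y, k, a, b, hE, hk, hab, rfl⟩ | ⟨x, y, b, k, hE, hk, rfl⟩ |
      ⟨x, y, b, k, hE, hk, rfl⟩ | ⟨ℓ, rfl⟩ | ⟨j, ℓ, -, rfl⟩ <;>
      obtain rfl := Finset.singleton_inj.1 hw
    · exact layered k hk rfl (by simp [PV.layer])
    · exact layered k hk rfl (by simp [PV.layer])
    · exact layered k hk rfl (by simp [PV.layer])
    · refine Or.inl (mem_fcClosure_of_mem hC rfl fun z hz => ?_)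
      obtain ⟨x, y, k, hE, hk, rfl⟩ := mem_bigBody.1 hz
      have hei : PV.e x y i ∈ F :=
        hTF _ (hneg (mem_bigBody.2 ⟨x, y, i, hE, hi, rfl⟩)) (Or.inr rfl)
      exact e_mem_fcClosure_of_layer Set.inter_subset_right hi hk hei
    · have hv : PV.v j ∈ F := hTF _ (hneg (by simp)) (Or.inl rfl)
      exact absurd hv (v_not_mem_fcClosure fun h => by simpa using h.2)
  exact hTF _ (fcClosure_subset hQT hclosed hℓ) (Or.inl rfl)

/-- An upper bound for the closure of `PV.u '' S` when the vertex `y₀` has no supported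
label. -/
def unsupportedBound (I : LabelCover X Y A B) (S : Set (Lab X Y A B)) (y₀ : Y) :
    Set (PV X Y A B) :=
  {w | match w with
    | .u ℓ => ℓ ∈ S
    | .e _ y _ => y ≠ y₀
    | .el x y b _ => y ≠ y₀ ∨ ∃ a, .inl (x, a) ∈ S ∧ .inr (y, b) ∈ S ∧ (a, b) ∈ I.cst (x, y)
    | .v _ => False}

lemma fcClosed_unsupportedBound (hd : 1 ≤ d) (hnoIsoY : ∀ y, ∃ x, (x, y) ∈ I.E)
    {S : Set (Lab X Y A B)} {y₀ : Y} (hy₀ : ∀ b, ¬ I.Supported S y₀ b) :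
    FcClosed (PhiCNF I d t) (unsupportedBound I S y₀) := by
  intro C hC w hw hneg
  rcases mem_PhiCNF.1 hC with ⟨x, y, k, a, b, hE, hk, hab, rfl⟩ | ⟨x, y, b, k, hE, hk, rfl⟩ |
    ⟨x, y, b, k, hE, hk, rfl⟩ | ⟨ℓ, rfl⟩ | ⟨j, ℓ, -, rfl⟩ <;>
    obtain rfl := Finset.singleton_inj.1 hw <;>
    simp only [coe_insert, coe_singleton, Set.insert_subset_iff, Set.singleton_subset_iff,
      coe_image, Set.image_subset_iff] at hneg
  · exact Or.inr ⟨a, hneg.1, hneg.2, hab⟩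
  · rintro rfl
    refine hy₀ b ⟨?_, fun z hz => ?_⟩
    · obtain ⟨a, -, h, -⟩ := (hneg (mem_Nbr.2 hE)).resolve_left (not_not.2 rfl)
      exact h
    · obtain ⟨a, h, -, hab⟩ := (hneg (mem_Nbr.2 hz)).resolve_left (not_not.2 rfl)
      exact ⟨a, h, hab⟩
  · exact Or.inl hneg
  · obtain ⟨x₀, hx₀⟩ := hnoIsoY y₀
    exact absurd (hneg (mem_bigBody.2 ⟨x₀, y₀, 1, hx₀, mem_Icc.2 ⟨le_rfl, hd⟩, rfl⟩))
      (by simp [unsupportedBound])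
  · exact hneg.elim

lemma exists_supported_of_forall_u_mem (hfeas : ∃ f g, I.IsTotalCover f g)
    (hnoIsoY : ∀ y, ∃ x, (x, y) ∈ I.E) (hd : 1 ≤ d) {S : Set (Lab X Y A B)}
    (hu : ∀ ℓ, PV.u ℓ ∈ fcClosure (PhiCNF I d t) (PV.u '' S)) (y : Y) :
    ∃ b, I.Supported S y b := by
  by_contra hy
  push Not at hy
  have hS : ∀ ℓ, ℓ ∈ S := fun ℓ =>
    fcClosure_subset (by rintro _ ⟨ℓ', hℓ', rfl⟩; exact hℓ')
      (fcClosed_unsupportedBound hd hnoIsoY hy) (hu ℓ)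
  obtain ⟨b, hb⟩ := I.exists_supported_univ hfeas y
  exact hy b (hb.mono fun ℓ _ => hS ℓ)

end Canonical

section MinimumRepresentation

variable {X Y A B : Type*} [Fintype X] [Fintype Y] [Fintype A] [Fintype B]
  [DecidableEq X] [DecidableEq Y] [DecidableEq A] [DecidableEq B]
  {I : LabelCover X Y A B} {d t : ℕ} {Υ Ψ : Finset (Clause (PV X Y A B))} {j : ℕ}

def labelsOf (Υ : Finset (Clause (PV X Y A B))) (j : ℕ) : Set (Lab X Y A B) :=
  {ℓ | ⟨{PV.u ℓ}, {PV.v j}⟩ ∈ Υ}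

lemma isHead_of_mem (hΥ : IsPureHornCNF Υ) (hrep : Represents Υ (hFun I d t))
    {C : Clause (PV X Y A B)} {w : PV X Y A B} (hC : C ∈ Υ) (hw : C.pos = {w}) :
    IsHead I d w := by
  have himp := hrep.implicate hC
  rw [Clause.eq_of_pos_eq hw, implicate_iff_mem_fcClosure isPureHornCNF_PhiCNF
    represents_PhiCNF] at himp
  refine (fcClosure_PhiCNF_subset himp).resolve_left fun hwC => ?_
  exact Finset.disjoint_left.1 (hΥ C hC).1 (hw ▸ Finset.mem_singleton_self w) hwC

/-- Since `v(j)` alone derives every head, primality leaves no other variable in the body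
of a clause containing `v(j)`. -/
lemma neg_eq_singleton_of_v_mem (hΥ : IsPureHornCNF Υ) (hrep : Represents Υ (hFun I d t))
    (hprime : ∀ C ∈ Υ, PrimeImplicate (hFun I d t) C) (hfeas : ∃ f g, I.IsTotalCover f g)
    (hj : j ∈ Icc 1 t) {C : Clause (PV X Y A B)} (hC : C ∈ Υ) (hv : PV.v j ∈ C.neg) :
    C.neg = {PV.v j} := by
  obtain ⟨w, hw⟩ := (hΥ C hC).2
  have hwv : w ∈ fcClosure (PhiCNF I d t) {PV.v j} :=
    mem_fcClosure_of_isHead hfeas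
      (fun ℓ => mem_fcClosure_of_mem (clauseE_mem_PhiCNF ℓ hj) rfl (by simp [subset_fcClosure]))
      (isHead_of_mem hΥ hrep hC hw)
  refine Finset.eq_singleton_iff_unique_mem.2 ⟨hv, fun z hz => ?_⟩
  by_contra hzv
  refine (hprime C hC).2.2.2 z hz ?_
  rw [hw, implicate_iff_mem_fcClosure isPureHornCNF_PhiCNF represents_PhiCNF]
  refine fcClosure_mono ?_ hwv
  simp [hv, Ne.symm hzv]

lemma u_mem_fcClosure_vHeads (hΥ : IsPureHornCNF Υ) (hrep : Represents Υ (hFun I d t))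
    (hprime : ∀ C ∈ Υ, PrimeImplicate (hFun I d t) C) (hfeas : ∃ f g, I.IsTotalCover f g)
    (hj : j ∈ Icc 1 t) (ℓ : Lab X Y A B) :
    PV.u ℓ ∈ fcClosure (PhiCNF I d t) {w | ⟨{w}, {PV.v j}⟩ ∈ Υ} := by
  have h := represents_PhiCNF.implicate (clauseE_mem_PhiCNF (I := I) (d := d) ℓ hj)
  rw [implicate_iff_mem_fcClosure hΥ hrep, coe_singleton] at h
  have h' := fcClosure_singleton_subset _
    (fun C hC => neg_eq_singleton_of_v_mem hΥ hrep hprime hfeas hj hC) h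
  rw [fcClosure_eq_of_represents isPureHornCNF_PhiCNF represents_PhiCNF hΥ hrep] at h'
  exact h'.resolve_left (by simp)

lemma represents_of_fcClosure_v (hΥ : IsPureHornCNF Υ) (hrep : Represents Υ (hFun I d t))
    (hfeas : ∃ f g, I.IsTotalCover f g) (hΨ : ∀ C ∈ Ψ, Implicate (hFun I d t) C)
    (hsub : ∀ C ∈ Υ, C.neg ≠ {PV.v j} → C ∈ Ψ) {Q : Set (PV X Y A B)}
    (hQ : Q ⊆ fcClosure Ψ {PV.v j}) (hQv : PV.v j ∉ Q)
    (hu : ∀ ℓ, PV.u ℓ ∈ fcClosure (PhiCNF I d t) Q) : Represents Ψ (hFun I d t) := by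
  refine Represents.of_mem_fcClosure hΥ hrep hΨ fun C hC w hw => ?_
  by_cases hCv : C.neg = {PV.v j}
  · have hwQ := mem_fcClosure_of_isHead hfeas hu (isHead_of_mem hΥ hrep hC hw)
    rw [← fcClosure_eq_of_represents isPureHornCNF_PhiCNF represents_PhiCNF hΥ hrep] at hwQ
    have hvΨ : PV.v j ∉ fcClosure Ψ Q := fun h =>
      v_not_mem_fcClosure hQv
        (fcClosure_subset_of_implicate isPureHornCNF_PhiCNF represents_PhiCNF hΨ h)
    rw [hCv, coe_singleton]
    refine fcClosure_subset_fcClosure hQ (fcClosure_subset_of_not_fires ?_ hwQ)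
    intro C' hC' hC'Ψ hC'neg
    have hC'v : C'.neg = {PV.v j} := by_contra fun h => hC'Ψ (hsub C' hC' h)
    exact hvΨ (hC'neg (by simp [hC'v]))
  · exact mem_fcClosure_of_mem (hsub C hC hCv) hw subset_fcClosure

/-- Otherwise the clauses `v(j) → w` of `Υ` could be traded for the `d - 1 = |L ∪ L′|` clauses
`v(j) → u(ℓ)`. -/
lemma card_filter_neg_eq_v_lt (hΥ : IsPureHornCNF Υ) (hrep : Represents Υ (hFun I d t))
    (hfeas : ∃ f g, I.IsTotalCover f g) (hj : j ∈ Icc 1 t)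
    (hd : d = 1 + Fintype.card X * Fintype.card A + Fintype.card Y * Fintype.card B)
    (hmin : ∀ Υ' : Finset (Clause (PV X Y A B)), IsPureHornCNF Υ' →
      Represents Υ' (hFun I d t) → Υ.card ≤ Υ'.card) :
    #{C ∈ Υ | C.neg = {PV.v j}} < d := by
  by_contra hle
  set Υ' := {C ∈ Υ | ¬ C.neg = {PV.v j}} ∪
    univ.image fun ℓ => (⟨{PV.u ℓ}, {PV.v j}⟩ : Clause (PV X Y A B))
  have hΥ' : IsPureHornCNF Υ' := by
    intro C hC
    rcases mem_union.1 hC with h | h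
    · exact hΥ C (mem_filter.1 h).1
    · obtain ⟨ℓ, -, rfl⟩ := mem_image.1 h
      exact ⟨by simp [Clause.IsClause], _, rfl⟩
  have hrep' : Represents Υ' (hFun I d t) := by
    refine represents_of_fcClosure_v hΥ hrep hfeas ?_
      (fun C hC hCv => mem_union_left _ (mem_filter.2 ⟨hC, hCv⟩)) (Q := Set.range PV.u) ?_
      (by simp) fun ℓ => subset_fcClosure ⟨ℓ, rfl⟩
    · intro C hC
      rcases mem_union.1 hC with h | h
      · exact hrep.implicate (mem_filter.1 h).1
      · obtain ⟨ℓ, -, rfl⟩ := mem_image.1 h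
        exact represents_PhiCNF.implicate (clauseE_mem_PhiCNF ℓ hj)
    · rintro _ ⟨ℓ, rfl⟩
      exact mem_fcClosure_of_mem (mem_union_right _ (mem_image_of_mem _ (mem_univ ℓ))) rfl
        (by simp [subset_fcClosure])
  have hcard : #Υ' < #Υ := by
    have h₁ : #Υ' ≤ #{C ∈ Υ | ¬ C.neg = {PV.v j}} + #(univ : Finset (Lab X Y A B)) :=
      (card_union_le _ _).trans (Nat.add_le_add_left card_image_le _)
    have h₂ := card_filter_add_card_filter_not (s := Υ) (fun C => C.neg = {PV.v j})
    simp only [card_univ, Fintype.card_sum, Fintype.card_prod] at h₁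
    omega
  exact (hmin Υ' hΥ' hrep').not_gt hcard

lemma u_mem_fcClosure_labelsOf (hΥ : IsPureHornCNF Υ) (hrep : Represents Υ (hFun I d t))
    (hprime : ∀ C ∈ Υ, PrimeImplicate (hFun I d t) C) (hfeas : ∃ f g, I.IsTotalCover f g)
    (hj : j ∈ Icc 1 t)
    (hd : d = 1 + Fintype.card X * Fintype.card A + Fintype.card Y * Fintype.card B)
    (hmin : ∀ Υ' : Finset (Clause (PV X Y A B)), IsPureHornCNF Υ' →
      Represents Υ' (hFun I d t) → Υ.card ≤ Υ'.card) (ℓ : Lab X Y A B) :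
    PV.u ℓ ∈ fcClosure (PhiCNF I d t) (PV.u '' labelsOf Υ j) := by
  by_contra hℓ
  have hlayer : ∀ i ∈ Icc 1 d, ∃ w, ⟨{w}, {PV.v j}⟩ ∈ Υ ∧ w.layer = i := by
    intro i hi
    by_contra hno
    push Not at hno
    refine hℓ (fcClosure_mono ?_ (u_mem_fcClosure_inter_range_u hi
      (fun w hw => ⟨isHead_of_mem hΥ hrep hw rfl, hno w hw⟩)
      (u_mem_fcClosure_vHeads hΥ hrep hprime hfeas hj ℓ)))
    rintro _ ⟨hw, ℓ', rfl⟩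
    exact ⟨ℓ', hw, rfl⟩
  have hsurj : Set.SurjOn (fun C : Clause (PV X Y A B) => C.pos.sup PV.layer)
      ↑{C ∈ Υ | C.neg = {PV.v j}} ↑(Icc 1 d) := by
    intro i hi
    obtain ⟨w, hw, rfl⟩ := hlayer i hi
    exact ⟨_, mem_filter.2 ⟨hw, rfl⟩, sup_singleton⟩
  have := card_le_card_of_surjOn _ hsurj
  have := card_filter_neg_eq_v_lt hΥ hrep hfeas hj hd hmin
  simp only [Nat.card_Icc] at *
  omega

lemma exists_supported_labelsOf (hΥ : IsPureHornCNF Υ) (hrep : Represents Υ (hFun I d t))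
    (hprime : ∀ C ∈ Υ, PrimeImplicate (hFun I d t) C) (hfeas : ∃ f g, I.IsTotalCover f g)
    (hnoIsoY : ∀ y, ∃ x, (x, y) ∈ I.E) (hj : j ∈ Icc 1 t)
    (hd : d = 1 + Fintype.card X * Fintype.card A + Fintype.card Y * Fintype.card B)
    (hmin : ∀ Υ' : Finset (Clause (PV X Y A B)), IsPureHornCNF Υ' →
      Represents Υ' (hFun I d t) → Υ.card ≤ Υ'.card) (y : Y) :
    ∃ b, I.Supported (labelsOf Υ j) y b :=
  exists_supported_of_forall_u_mem hfeas hnoIsoY (by omega)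
    (u_mem_fcClosure_labelsOf hΥ hrep hprime hfeas hj hd hmin) y

lemma not_forall_supported_diff (hΥ : IsPureHornCNF Υ) (hrep : Represents Υ (hFun I d t))
    (hfeas : ∃ f g, I.IsTotalCover f g)
    (hmin : ∀ Υ' : Finset (Clause (PV X Y A B)), IsPureHornCNF Υ' →
      Represents Υ' (hFun I d t) → Υ.card ≤ Υ'.card)
    {ℓ : Lab X Y A B} (hℓ : ℓ ∈ labelsOf Υ j) :
    ¬ ∀ y, ∃ b, I.Supported (labelsOf Υ j \ {ℓ}) y b := by
  intro hsupp
  have hrep' : Represents (Υ.erase ⟨{PV.u ℓ}, {PV.v j}⟩) (hFun I d t) := by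
    refine represents_of_fcClosure_v hΥ hrep hfeas
      (fun C hC => hrep.implicate (mem_of_mem_erase hC))
      (fun C hC hCv => mem_erase.2 ⟨by rintro rfl; exact hCv rfl, hC⟩)
      (Q := PV.u '' (labelsOf Υ j \ {ℓ})) ?_ (by simp) (u_mem_fcClosure_of_supported hsupp)
    rintro _ ⟨ℓ', ⟨hℓ', hne⟩, rfl⟩
    refine mem_fcClosure_of_mem (mem_erase.2 ⟨?_, hℓ'⟩) rfl (by simp [subset_fcClosure])
    simpa using hne
  exact (hmin _ (fun C hC => hΥ C (mem_of_mem_erase hC)) hrep').not_gt (card_erase_lt_of_mem hℓ)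

/-- Dropping the clause `v(j) → u(y,b)` must destroy every supported label of some vertex;
as all vertices have one, `b` is the only supported label of `y`. -/
lemma supported_labelsOf_iff (hΥ : IsPureHornCNF Υ) (hrep : Represents Υ (hFun I d t))
    (hprime : ∀ C ∈ Υ, PrimeImplicate (hFun I d t) C) (hfeas : ∃ f g, I.IsTotalCover f g)
    (hnoIsoY : ∀ y, ∃ x, (x, y) ∈ I.E) (hj : j ∈ Icc 1 t)
    (hd : d = 1 + Fintype.card X * Fintype.card A + Fintype.card Y * Fintype.card B)
    (hmin : ∀ Υ' : Finset (Clause (PV X Y A B)), IsPureHornCNF Υ' →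
      Represents Υ' (hFun I d t) → Υ.card ≤ Υ'.card)
    {y : Y} {b : B} (hb : .inr (y, b) ∈ labelsOf Υ j) (b' : B) :
    I.Supported (labelsOf Υ j) y b' ↔ b' = b := by
  obtain ⟨y', hy'⟩ : ∃ y', ∀ b', ¬ I.Supported (labelsOf Υ j \ {.inr (y, b)}) y' b' := by
    simpa using not_forall_supported_diff hΥ hrep hfeas hmin hb
  have hy'b : ∀ b', I.Supported (labelsOf Υ j) y' b' → y' = y ∧ b' = b := by
    intro b' hb'
    by_contra hne
    refine hy' b' ⟨⟨hb'.1, by simpa using hne⟩, fun x hE => ?_⟩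
    obtain ⟨a, ha, hab⟩ := hb'.2 x hE
    exact ⟨a, ⟨ha, by simp⟩, hab⟩
  obtain ⟨b₀, hb₀⟩ := exists_supported_labelsOf hΥ hrep hprime hfeas hnoIsoY hj hd hmin y'
  obtain ⟨rfl, rfl⟩ := hy'b b₀ hb₀
  exact ⟨fun h => (hy'b b' h).2, fun h => h ▸ hb₀⟩

lemma mem_fjX {x : X} {a : A} : a ∈ fjX Υ j x ↔ .inl (x, a) ∈ labelsOf Υ j := by
  simp [fjX, labelsOf]

lemma mem_fjY {y : Y} {b : B} : b ∈ fjY Υ j y ↔ .inr (y, b) ∈ labelsOf Υ j := by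
  simp [fjY, labelsOf]

end MinimumRepresentation

theorem fj_is_tight_totalCover_general
    {X Y A B : Type*} [Fintype X] [Fintype Y] [Fintype A] [Fintype B]
    [DecidableEq X] [DecidableEq Y] [DecidableEq A] [DecidableEq B]
    (I : LabelCover X Y A B) (d t : ℕ)
    (hd : d = 1 + Fintype.card X * Fintype.card A + Fintype.card Y * Fintype.card B)
    (hnoIsoY : ∀ y : Y, ∃ x, (x, y) ∈ I.E)
    (hfeas : ∃ f g, I.IsTotalCover f g)
    (Υ : Finset (Clause (PV X Y A B)))
    (hPH : IsPureHornCNF Υ)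
    (hprime : ∀ C ∈ Υ, PrimeImplicate (hFun I d t) C)
    (hrep : Represents Υ (hFun I d t))
    (hmin : ∀ Υ' : Finset (Clause (PV X Y A B)), IsPureHornCNF Υ' →
      Represents Υ' (hFun I d t) → Υ.card ≤ Υ'.card) :
    ∀ j ∈ Finset.Icc 1 t,
      I.IsTotalCover (fjX Υ j) (fjY Υ j) ∧ LabelCover.Tight (fjY Υ j) := by
  intro j hj
  have hsupp := exists_supported_labelsOf hPH hrep hprime hfeas hnoIsoY hj hd hmin
  have huniq {y : Y} {b : B} (hb : b ∈ fjY Υ j y) :=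
    supported_labelsOf_iff hPH hrep hprime hfeas hnoIsoY hj hd hmin (mem_fjY.1 hb)
  refine ⟨⟨fun y => ?_, fun e hE b hb => ?_⟩, fun y => ?_⟩
  · obtain ⟨b, hb⟩ := hsupp y
    exact ⟨b, mem_fjY.2 hb.1⟩
  · obtain ⟨a, ha, hab⟩ := ((huniq hb b).2 rfl).2 e.1 hE
    exact ⟨a, mem_fjX.2 ha, hab⟩
  · obtain ⟨b, hb⟩ := hsupp y
    refine card_eq_one.2 ⟨b, eq_singleton_iff_unique_mem.2 ⟨mem_fjY.2 hb.1, fun b' hb' => ?_⟩⟩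
    exact ((huniq hb' b).1 hb).symm

/-- With `d = 1 + rλ + sλ′`, if `Υ` is a clause minimum prime pure
Horn CNF representation of the canonical function `h`, then for every `j ∈ [t]` the
labeling `f_j` extracted from `Υ` is a tight total-cover of the (refined) Label
Cover instance. -/
theorem fj_is_tight_totalCover
    {X Y A B : Type*} [Fintype X] [Fintype Y] [Fintype A] [Fintype B]
    [DecidableEq X] [DecidableEq Y] [DecidableEq A] [DecidableEq B]
    [Nonempty X] [Nonempty Y]
    (I : LabelCover X Y A B) (d t : ℕ) (ht : 1 ≤ t)
    (hd : d = 1 + Fintype.card X * Fintype.card A + Fintype.card Y * Fintype.card B)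
    (hnoIsoX : ∀ x : X, ∃ y, (x, y) ∈ I.E)
    (hnoIsoY : ∀ y : Y, ∃ x, (x, y) ∈ I.E)
    (hfeas : ∃ f g, I.IsTotalCover f g)
    (Υ : Finset (Clause (PV X Y A B)))
    (hPH : IsPureHornCNF Υ)
    (hprime : ∀ C ∈ Υ, PrimeImplicate (hFun I d t) C)
    (hrep : Represents Υ (hFun I d t))
    (hmin : ∀ Υ' : Finset (Clause (PV X Y A B)), IsPureHornCNF Υ' →
      Represents Υ' (hFun I d t) → Υ.card ≤ Υ'.card) :
    ∀ j ∈ Finset.Icc 1 t,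
      I.IsTotalCover (fjX Υ j) (fjY Υ j) ∧ LabelCover.Tight (fjY Υ j) :=
  fj_is_tight_totalCover_general I d t hd hnoIsoY hfeas Υ hPH hprime hrep hmin
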